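/- Let A and C be independent uniform random variables on {0,...,N_A-1} and {0,...,N_C-1} with N_A ≥ N_C ≥ 1. Then H(A + C) = ln N_A + ((N_C-1)/N_A) ln N_C - (2/(N_A N_C)) Σ_{i=1}^{N_C-1} i ln i. -/

import Mathlib

/-!
Under uniform weights a value `s` of `A + C` has probability `n s / (N_A N_C)`, where `n s` counts
the pairs `(a, c)` with `a + c = s`, so `H(A + C) = ln (N_A N_C) - (N_A N_C)⁻¹ ∑ₛ n s ln (n s)`.
For `N_C ≤ N_A` the counts form a trapezoid: they rise through `1, …, N_C - 1`, stay at `N_C` for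
`N_A - N_C + 1` values of `s`, and fall back symmetrically, so the sum is
`2 ∑ i ln i + (N_A - N_C + 1) N_C ln N_C`.
-/

open scoped Classical
open Finset

namespace ESSL

variable {Ω : Type*} [Fintype Ω]

/-- Probability that the random variable `Y` takes the value `a`, under weights `p`. -/
noncomputable def pr {α : Type*} (p : Ω → ℝ) (Y : Ω → α) (a : α) : ℝ :=
  ∑ ω ∈ univ.filter (fun ω => Y ω = a), p ω

/-- Shannon entropy (in nats) of a random variable `Y` on a finite space. -/
noncomputable def ent {α : Type*} (p : Ω → ℝ) (Y : Ω → α) : ℝ :=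
  ∑ a ∈ univ.image Y, -(pr p Y a * Real.log (pr p Y a))

/-- Conditional entropy `H(Y | X)`. -/
noncomputable def condEnt {α β : Type*} (p : Ω → ℝ) (Y : Ω → α) (X : Ω → β) : ℝ :=
  ent p (fun ω => (Y ω, X ω)) - ent p X

/-- Mutual information `I(Y ; X)`. -/
noncomputable def mi {α β : Type*} (p : Ω → ℝ) (Y : Ω → α) (X : Ω → β) : ℝ :=
  ent p Y - condEnt p Y X

/-- Conditional mutual information `I(A ; C | X) = H(A|X) - H(A|X,C)`. -/
noncomputable def cmi {α β γ : Type*} (p : Ω → ℝ) (A : Ω → α) (C : Ω → β) (X : Ω → γ) : ℝ :=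
  condEnt p A X - condEnt p A (fun ω => (X ω, C ω))

/-- `p` is a probability mass function on `Ω`. -/
def IsProb (p : Ω → ℝ) : Prop := (∀ ω, 0 ≤ p ω) ∧ ∑ ω, p ω = 1

/-- Independence of the random variables `A` and `C`. -/
def IndepRV {α β : Type*} (p : Ω → ℝ) (A : Ω → α) (C : Ω → β) : Prop :=
  ∀ a c, pr p (fun ω => (A ω, C ω)) (a, c) = pr p A a * pr p C c

/-- The uniform joint distribution of two independent uniform categorical variables. -/
noncomputable def unif (NA NC : ℕ) : Fin NA × Fin NC → ℝ := fun _ => ((NA : ℝ) * NC)⁻¹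

/-- The first (augmentation) variable `A`, uniform on `{0,…,NA-1}`. -/
def Av {NA NC : ℕ} : Fin NA × Fin NC → ℕ := fun ω => ω.1

/-- The second (class) variable `C`, uniform on `{0,…,NC-1}`. -/
def Cv {NA NC : ℕ} : Fin NA × Fin NC → ℕ := fun ω => ω.2

noncomputable def fiberCard {α : Type*} (Y : Ω → α) (a : α) : ℕ :=
  #(univ.filter (fun ω => Y ω = a))

theorem pr_const {α : Type*} (c : ℝ) (Y : Ω → α) (a : α) :
    pr (fun _ => c) Y a = fiberCard Y a * c := by
  simp only [pr, fiberCard, sum_const, nsmul_eq_mul]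

theorem fiberCard_eq_zero_of_notMem_image {α : Type*} {Y : Ω → α} {a : α}
    (ha : a ∉ univ.image Y) : fiberCard Y a = 0 := by
  simp only [fiberCard, card_eq_zero, filter_eq_empty_iff, mem_univ, true_implies]
  exact fun ω hω => ha (mem_image.mpr ⟨ω, mem_univ ω, hω⟩)

theorem sum_fiberCard {α : Type*} {Y : Ω → α} {T : Finset α} (hT : ∀ ω, Y ω ∈ T) :
    ∑ a ∈ T, (fiberCard Y a : ℝ) = Fintype.card Ω := by
  rw [← card_univ, card_eq_sum_card_fiberwise fun ω _ => hT ω]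
  push_cast
  rfl

theorem ent_const {α : Type*} (c : ℝ) {Y : Ω → α} {T : Finset α} (hT : ∀ ω, Y ω ∈ T) :
    ent (fun _ => c) Y = Fintype.card Ω * Real.negMulLog c
      - c * ∑ a ∈ T, (fiberCard Y a : ℝ) * Real.log (fiberCard Y a) := by
  have hterm : ∀ a, -(pr (fun _ => c) Y a * Real.log (pr (fun _ => c) Y a))
      = c * Real.negMulLog (fiberCard Y a) + fiberCard Y a * Real.negMulLog c := by
    intro a
    rw [pr_const, ← Real.negMulLog_mul, Real.negMulLog_eq_neg]
  have himage : univ.image Y ⊆ T := fun a ha => by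
    obtain ⟨ω, -, rfl⟩ := mem_image.mp ha
    exact hT ω
  rw [ent, sum_subset himage fun a _ ha => by
    simp [pr_const, fiberCard_eq_zero_of_notMem_image ha]]
  simp only [hterm, sum_add_distrib, ← mul_sum, ← sum_mul, sum_fiberCard hT,
    Real.negMulLog, neg_mul, sum_neg_distrib]
  ring

theorem sum_range_trapezoid {M : Type*} [AddCommMonoid M] (f : ℕ → M) {m n : ℕ}
    (hm : 1 ≤ m) (hmn : m ≤ n) :
    ∑ s ∈ range (n + m - 1), f (min (s + 1) (min m (n + m - 1 - s)))
      = 2 • ∑ i ∈ Icc 1 (m - 1), f i + (n - m + 1) • f m := by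
  have rising : ∑ s ∈ range (m - 1), f (min (s + 1) (min m (n + m - 1 - s)))
      = ∑ i ∈ Icc 1 (m - 1), f i := by
    rw [← Ico_add_one_right_eq_Icc, sum_Ico_eq_sum_range, Nat.add_sub_cancel]
    refine sum_congr rfl fun s hs => congrArg f ?_
    rw [mem_range] at hs
    omega
  have plateau : ∑ t ∈ range (n - m + 1),
      f (min (m - 1 + t + 1) (min m (n + m - 1 - (m - 1 + t)))) = (n - m + 1) • f m := by
    rw [← card_range (n - m + 1), ← sum_const]
    refine sum_congr (by rw [card_range]) fun t ht => congrArg f ?_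
    rw [mem_range] at ht
    omega
  have falling : ∑ t ∈ range (m - 1),
      f (min (m - 1 + (n - m + 1 + t) + 1) (min m (n + m - 1 - (m - 1 + (n - m + 1 + t)))))
      = ∑ i ∈ Icc 1 (m - 1), f i := by
    rw [← rising, ← sum_range_reflect]
    refine sum_congr rfl fun t ht => congrArg f ?_
    rw [mem_range] at ht
    omega
  rw [show range (n + m - 1) = range ((m - 1) + ((n - m + 1) + (m - 1))) by congr 1; omega,
    sum_range_add, sum_range_add, rising, plateau, falling, two_nsmul]
  abel

theorem fiberCard_add (NA NC s : ℕ) :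
    fiberCard (fun ω : Fin NA × Fin NC => (ω.1 : ℕ) + ω.2) s
      = min (s + 1) (min (min NA NC) (NA + NC - 1 - s)) := by
  have hproj : fiberCard (fun ω : Fin NA × Fin NC => (ω.1 : ℕ) + ω.2) s
      = #(Ico (s + 1 - NA) (min NC (s + 1))) := by
    refine card_bij' (fun ω _ => ω.2)
      (fun c hc => (⟨s - c, by simp only [mem_Ico] at hc; omega⟩,
        ⟨c, by simp only [mem_Ico] at hc; omega⟩)) ?_ ?_ ?_ ?_
    · intro ω hω
      simp only [mem_filter, mem_univ, true_and] at hω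
      simp only [mem_Ico]
      omega
    · intro c hc
      simp only [mem_Ico] at hc
      simp only [mem_filter, mem_univ, true_and]
      omega
    · intro ω hω
      simp only [mem_filter, mem_univ, true_and] at hω
      exact Prod.ext (Fin.ext (by simp only; omega)) rfl
    · intro c hc
      rfl
  rw [hproj, Nat.card_Ico]
  omega

theorem sum_fiberCard_add_mul_log (NA NC : ℕ) (h1 : 1 ≤ NC) (h2 : NC ≤ NA) :
    ∑ s ∈ range (NA + NC - 1),
        (fiberCard (fun ω : Fin NA × Fin NC => (ω.1 : ℕ) + ω.2) s : ℝ)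
          * Real.log (fiberCard (fun ω : Fin NA × Fin NC => (ω.1 : ℕ) + ω.2) s)
      = 2 * ∑ i ∈ Icc 1 (NC - 1), (i : ℝ) * Real.log i
        + ((NA : ℝ) - NC + 1) * (NC * Real.log NC) := by
  simp only [fiberCard_add, min_eq_right h2]
  rw [sum_range_trapezoid (fun k : ℕ => (k : ℝ) * Real.log k) h1 h2, nsmul_eq_mul, nsmul_eq_mul,
    Nat.cast_add, Nat.cast_sub h2]
  push_cast
  ring

/-- For `N_A ≥ N_C ≥ 1`,
`H(A+C) = ln N_A + ((N_C-1)/N_A) ln N_C - (2/(N_A N_C)) Σ_{i=1}^{N_C-1} i ln i`. -/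
theorem stmt_3 (NA NC : ℕ) (h1 : 1 ≤ NC) (h2 : NC ≤ NA) :
    ent (unif NA NC) (fun ω => Av ω + Cv ω)
      = Real.log NA + ((NC : ℝ) - 1) / NA * Real.log NC
        - 2 / ((NA : ℝ) * NC) * ∑ i ∈ Finset.Icc 1 (NC - 1), (i : ℝ) * Real.log i := by
  have hNC : (NC : ℝ) ≠ 0 := by positivity
  have hNA : (NA : ℝ) ≠ 0 := by norm_cast; omega
  have hrange (ω : Fin NA × Fin NC) : Av ω + Cv ω ∈ range (NA + NC - 1) := by
    simp only [Av, Cv, mem_range]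
    omega
  unfold unif
  rw [ent_const _ hrange, Fintype.card_prod, Fintype.card_fin, Fintype.card_fin]
  simp only [Av, Cv]
  rw [sum_fiberCard_add_mul_log NA NC h1 h2, Real.negMulLog, Nat.cast_mul, Real.log_inv,
    Real.log_mul hNA hNC]
  field_simp
  ring

end ESSL
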